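/- Every Σ-formula is a self-prover in QGL: if S is a Σ-formula then QGL proves S → □S. More precisely: ⊤ and all formulas of the form □A are self-provers, and the class of self-provers is closed under conjunction, disjunction, and existential quantification. -/

import Mathlib

namespace PML

/-- Formulas of predicate modal logic, with propositional variables (language L''). -/
inductive Fml : Type
  | verum : Fml
  | falsum : Fml
  | pvar (q : ℕ) : Fml
  | pred (P : ℕ) (args : List ℕ) : Fml
  | neg (A : Fml) : Fml
  | imp (A B : Fml) : Fml
  | all (u : ℕ) (A : Fml) : Fml
  | box (A : Fml) : Fml

namespace Fml

def lor (A B : Fml) : Fml := A.neg.imp B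
def land (A B : Fml) : Fml := (A.imp B.neg).neg
def iff (A B : Fml) : Fml := (A.imp B).land (B.imp A)
def ex (u : ℕ) (A : Fml) : Fml := (Fml.all u A.neg).neg
def boxdot (A : Fml) : Fml := A.box.land A

def boxIter : ℕ → Fml → Fml
  | 0, A => A
  | n + 1, A => (boxIter n A).box

/-- Free variables. -/
def free : Fml → Finset ℕ
  | pred _ args => args.toFinset
  | neg A => A.free
  | imp A B => A.free ∪ B.free
  | all u A => A.free.erase u
  | box A => A.free
  | _ => ∅

/-- Bound variables. -/
def bound : Fml → Finset ℕ
  | neg A => A.bound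
  | imp A B => A.bound ∪ B.bound
  | all u A => insert u A.bound
  | box A => A.bound
  | _ => ∅

/-- Propositional variables occurring in a formula. -/
def pvars : Fml → Finset ℕ
  | pvar q => {q}
  | neg A => A.pvars
  | imp A B => A.pvars ∪ B.pvars
  | all _ A => A.pvars
  | box A => A.pvars
  | _ => ∅

/-- Predicate symbols occurring in a formula. -/
def preds : Fml → Finset ℕ
  | pred P _ => {P}
  | neg A => A.preds
  | imp A B => A.preds ∪ B.preds
  | all _ A => A.preds
  | box A => A.preds
  | _ => ∅

/-- Predicate symbols together with the arity they are used with. -/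
def predSig : Fml → Finset (ℕ × ℕ)
  | pred P args => {(P, args.length)}
  | neg A => A.predSig
  | imp A B => A.predSig ∪ B.predSig
  | all _ A => A.predSig
  | box A => A.predSig
  | _ => ∅

/-- Rename free occurrences of the variable `u` to `v`. -/
def rename : Fml → ℕ → ℕ → Fml
  | pred P args, u, v => pred P (args.map fun x => if x = u then v else x)
  | neg A, u, v => (A.rename u v).neg
  | imp A B, u, v => (A.rename u v).imp (B.rename u v)
  | all w A, u, v => if w = u then all w A else all w (A.rename u v)
  | box A, u, v => (A.rename u v).box
  | A, _, _ => A

/-- Substitution of a formula for a propositional variable. -/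
def psub : Fml → ℕ → Fml → Fml
  | pvar q, p, B => if q = p then B else pvar q
  | neg A, p, B => (A.psub p B).neg
  | imp A C, p, B => (A.psub p B).imp (C.psub p B)
  | all u A, p, B => all u (A.psub p B)
  | box A, p, B => (A.psub p B).box
  | A, _, _ => A

/-- Simultaneous substitution of formulas for all propositional variables. -/
def msub : Fml → (ℕ → Fml) → Fml
  | pvar q, σ => σ q
  | neg A, σ => (A.msub σ).neg
  | imp A C, σ => (A.msub σ).imp (C.msub σ)
  | all u A, σ => all u (A.msub σ)
  | box A, σ => (A.msub σ).box
  | A, _ => A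

/-- Depth-indexed substitution: occurrences of `p` at modal depth `i` are replaced by `σ i`. -/
def dsub : Fml → ℕ → (ℕ → Fml) → Fml
  | pvar q, p, σ => if q = p then σ 0 else pvar q
  | neg A, p, σ => (A.dsub p σ).neg
  | imp A C, p, σ => (A.dsub p σ).imp (C.dsub p σ)
  | all u A, p, σ => all u (A.dsub p σ)
  | box A, p, σ => (A.dsub p (fun i => σ (i + 1))).box
  | A, _, _ => A

/-- `A(p)[B_0,…,B_k]` for a list `[B_0,…,B_k]`. -/
def dsubL (A : Fml) (p : ℕ) (L : List Fml) : Fml := A.dsub p (fun i => L.getD i verum)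

/-- `A^{⊤(n)}`: replace every boxed subformula at modal depth `n` by `⊤`. -/
def eraseT : ℕ → Fml → Fml
  | 0, box _ => verum
  | n + 1, box A => (eraseT n A).box
  | n, neg A => (eraseT n A).neg
  | n, imp A B => (eraseT n A).imp (eraseT n B)
  | n, all u A => all u (eraseT n A)
  | _, A => A

/-- `occursAt p A d`: the propositional variable `p` occurs in `A` at modal depth `d`. -/
def occursAt (p : ℕ) : Fml → ℕ → Prop
  | pvar q, d => q = p ∧ d = 0
  | neg A, d => occursAt p A d
  | imp A B, d => occursAt p A d ∨ occursAt p B d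
  | all _ A, d => occursAt p A d
  | box A, d => ∃ d', d = d' + 1 ∧ occursAt p A d'
  | _, _ => False

/-- `A` is modalized in `p`: no occurrence of `p` at depth `0`. -/
def Modalized (p : ℕ) (A : Fml) : Prop := ¬ occursAt p A 0

/-- Conjunction of a list of formulas. -/
def conj : List Fml → Fml
  | [] => verum
  | A :: L => A.land (conj L)

/-- The canonical fixed-point sequence:
`A_0 := A^{⊤(0)}(p)[⊤]`, `A_{k+1} := A^{⊤(k+1)}(p)[⊤, A_k, …, A_0]`. -/
def fpSeq (p : ℕ) (A : Fml) : ℕ → Fml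
  | 0 => (eraseT 0 A).dsub p (fun _ => verum)
  | n + 1 => (eraseT (n + 1) A).dsub p
      (fun i => match i with
        | 0 => verum
        | j + 1 => fpSeq p A (n - j))
  termination_by k => k
  decreasing_by omega

end Fml

open Fml

/-- Axioms of predicate logic, together with the modal distribution axiom K. -/
inductive Ax : Fml → Prop
  | imp1 (A B : Fml) : Ax (A.imp (B.imp A))
  | imp2 (A B C : Fml) : Ax ((A.imp (B.imp C)).imp ((A.imp B).imp (A.imp C)))
  | contra (A B : Fml) : Ax ((A.neg.imp B.neg).imp (B.imp A))
  | verum : Ax Fml.verum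
  | exfalso (A : Fml) : Ax (Fml.falsum.imp A)
  | negE (A : Fml) : Ax (A.neg.imp (A.imp Fml.falsum))
  | negI (A : Fml) : Ax ((A.imp Fml.falsum).imp A.neg)
  | allE (A : Fml) (u v : ℕ) (h : v ∉ A.bound) : Ax ((Fml.all u A).imp (A.rename u v))
  | allK (A B : Fml) (u : ℕ) :
      Ax ((Fml.all u (A.imp B)).imp ((Fml.all u A).imp (Fml.all u B)))
  | allV (A : Fml) (u : ℕ) (h : u ∉ A.free) : Ax (A.imp (Fml.all u A))
  | k (A B : Fml) : Ax (((A.imp B).box).imp (A.box.imp B.box))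

/-- Hilbert-style provability from the base axioms plus extra axioms `Ext`,
closed under modus ponens, necessitation and generalization. -/
inductive Prf (Ext : Fml → Prop) : Fml → Prop
  | ax {A : Fml} : Ax A → Prf Ext A
  | ext {A : Fml} : Ext A → Prf Ext A
  | mp {A B : Fml} : Prf Ext (A.imp B) → Prf Ext A → Prf Ext B
  | nec {A : Fml} : Prf Ext A → Prf Ext A.box
  | gen {A : Fml} (u : ℕ) : Prf Ext A → Prf Ext (Fml.all u A)

/-- The smallest normal predicate modal logic QK. -/
def QK : Fml → Prop := Prf (fun _ => False)

inductive Ax4 : Fml → Prop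
  | four (A : Fml) : Ax4 (A.box.imp A.box.box)

/-- QK4 : QK plus the axiom 4. -/
def QK4 : Fml → Prop := Prf Ax4

inductive AxL : Fml → Prop
  | lob (A : Fml) : AxL (((A.box.imp A).box).imp A.box)

/-- QGL : QK plus Löb's axiom. -/
def QGL : Fml → Prop := Prf AxL

/-- NQGL : QK4 plus the infinitary rule BL. -/
inductive NQGL : Fml → Prop
  | ax {A : Fml} : Ax A → NQGL A
  | four (A : Fml) : NQGL (A.box.imp A.box.box)
  | mp {A B : Fml} : NQGL (A.imp B) → NQGL A → NQGL B
  | nec {A : Fml} : NQGL A → NQGL A.box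
  | gen {A : Fml} (u : ℕ) : NQGL A → NQGL (Fml.all u A)
  | bl {A : Fml} : (∀ n : ℕ, NQGL ((boxIter (n + 1) Fml.falsum).imp A)) → NQGL A

/-- Σ-formulas. -/
inductive IsSigma : Fml → Prop
  | box (A : Fml) : IsSigma A.box
  | lor {A B : Fml} : IsSigma A → IsSigma B → IsSigma (A.lor B)
  | land {A B : Fml} : IsSigma A → IsSigma B → IsSigma (A.land B)
  | ex {A : Fml} (u : ℕ) : IsSigma A → IsSigma (Fml.ex u A)

/- ## Kripke semantics -/

structure KFrame where
  W : Type
  R : W → W → Prop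
  Dom : Type
  D : W → Set Dom
  Dne : ∀ w, (D w).Nonempty
  mono : ∀ {w w'}, R w w' → D w ⊆ D w'

structure KModel extends KFrame where
  I : W → ℕ → List Dom → Prop
  V : W → ℕ → Prop

def Sat (M : KModel) : Fml → M.W → (ℕ → M.Dom) → Prop
  | .verum, _, _ => True
  | .falsum, _, _ => False
  | .pvar q, w, _ => M.V w q
  | .pred P args, w, ρ => M.I w P (args.map ρ)
  | .neg A, w, ρ => ¬ Sat M A w ρ
  | .imp A B, w, ρ => Sat M A w ρ → Sat M B w ρ
  | .all u A, w, ρ => ∀ a ∈ M.D w, Sat M A w (Function.update ρ u a)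
  | .box A, w, ρ => ∀ v, M.R w v → Sat M A v ρ

/-- Validity in a model. -/
def MVal (M : KModel) (A : Fml) : Prop :=
  ∀ (w : M.W) (ρ : ℕ → M.Dom), (∀ x, ρ x ∈ M.D w) → Sat M A w ρ

/-- Validity on a frame. -/
def FVal (F : KFrame) (A : Fml) : Prop :=
  ∀ (I : F.W → ℕ → List F.Dom → Prop) (V : F.W → ℕ → Prop),
    MVal { toKFrame := F, I := I, V := V } A

/-- Smoryński's model. -/
def MS : KModel where
  W := ℕ
  R := fun m n => n < m
  Dom := ℕ
  D := fun n => {m | n ≤ m}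
  Dne := fun n => ⟨n, le_refl n⟩
  mono := by intro w w' h x hx; simp only [Set.mem_setOf_eq] at *; omega
  I := fun w P L => P = 0 ∧ ∀ m ∈ L, m ≠ w + 1
  V := fun _ _ => False

/-- The finite truncations of Smoryński's model. -/
def Mk (k : ℕ) : KModel where
  W := Fin (k + 1)
  R := fun m n => (n : ℕ) < (m : ℕ)
  Dom := ℕ
  D := fun n => {m | (n : ℕ) ≤ m ∧ m ≤ k + 2}
  Dne := fun n => ⟨(n : ℕ), by simp only [Set.mem_setOf_eq]; have := n.isLt; omega⟩
  mono := by intro w w' h x hx; simp only [Set.mem_setOf_eq] at *; omega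
  I := fun w P L => P = 0 ∧ ∀ m ∈ L, m ≠ (w : ℕ) + 1
  V := fun _ _ => False

/-- `A` contains only the unary predicate symbol `P` (coded `0`) and no propositional variables. -/
def OnlyP (A : Fml) : Prop := A.predSig ⊆ {(0, 1)} ∧ A.pvars = ∅

/-- The atomic formula `P(u)`. -/
def Pat (u : ℕ) : Fml := Fml.pred 0 [u]

/-- `h(F) ≤ n`: there is no chain of `n+1` successive `R`-steps. -/
def HeightLe (F : KFrame) (n : ℕ) : Prop :=
  ∀ c : ℕ → F.W, ¬ ∀ i < n + 1, F.R (c i) (c (i + 1))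

end PML

/-!
Boxed formulas are self-provers because GL proves the transitivity axiom `□A → □□A`: apply
Löb's axiom to `A ∧ □A`. Closure under `∧` and `∨` follows from monotonicity of `□` and the
axiom K. For `∃u A`, box the instance `A → ∃u A` to get `A → □∃u A`, and then generalize over
`u`, which is not free in `□∃u A`. The only syntactic work is the instance `∀u B → B`: the axiom
`allE` only allows a variable that is not bound in `B`, so `B` has first to be α-renamed away
from `u`.
-/

namespace PML

namespace Fml

theorem rename_self (B : Fml) (u : ℕ) : B.rename u u = B := by
  induction B with
  | pred P args =>
    simp only [rename]
    rw [List.map_congr_left (g := id) (fun x _ => by by_cases h : x = u <;> simp [h])]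
    simp
  | all w C ih => simp [rename, ih]
  | _ => simp [rename, *]

theorem bound_rename (B : Fml) (u v : ℕ) : (B.rename u v).bound = B.bound := by
  induction B with
  | all w C ih => by_cases h : w = u <;> simp [rename, h, bound, ih]
  | _ => simp [rename, bound, *]

theorem rename_eq_self {B : Fml} {v : ℕ} (w : ℕ) (hf : v ∉ B.free) (hb : v ∉ B.bound) :
    B.rename v w = B := by
  induction B with
  | pred P args =>
    simp only [free, List.mem_toFinset] at hf
    simp only [rename]
    rw [List.map_congr_left (g := id) (fun x hx => by
      have : x ≠ v := fun h => hf (h ▸ hx)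
      simp [this])]
    simp
  | neg C ih => simp only [free, bound] at hf hb; simp [rename, ih hf hb]
  | imp C D ih1 ih2 =>
    simp only [free, bound, Finset.mem_union, not_or] at hf hb
    simp [rename, ih1 hf.1 hb.1, ih2 hf.2 hb.2]
  | box C ih => simp only [free, bound] at hf hb; simp [rename, ih hf hb]
  | all x C ih =>
    simp only [free, bound, Finset.mem_insert, Finset.mem_erase, not_or] at hf hb
    have hxv : x ≠ v := fun h => hb.1 h.symm
    simp [rename, hxv, ih (fun h => hf ⟨hxv.symm, h⟩) hb.2]
  | _ => simp [rename]

theorem rename_rename_eq_self {B : Fml} {u v : ℕ} (hf : v ∉ B.free) (hb : v ∉ B.bound) :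
    (B.rename u v).rename v u = B := by
  induction B with
  | pred P args =>
    simp only [free, List.mem_toFinset] at hf
    simp only [rename, List.map_map]
    rw [List.map_congr_left (g := id) (fun x hx => by
      have hxv : x ≠ v := fun h => hf (h ▸ hx)
      by_cases h : x = u <;> simp [h, Function.comp, hxv])]
    simp
  | neg C ih => simp only [free, bound] at hf hb; simp [rename, ih hf hb]
  | imp C D ih1 ih2 =>
    simp only [free, bound, Finset.mem_union, not_or] at hf hb
    simp [rename, ih1 hf.1 hb.1, ih2 hf.2 hb.2]
  | box C ih => simp only [free, bound] at hf hb; simp [rename, ih hf hb]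
  | all x C ih =>
    simp only [free, bound, Finset.mem_insert, Finset.mem_erase, not_or] at hf hb
    have hxv : x ≠ v := fun h => hb.1 h.symm
    have hfC : v ∉ C.free := fun h => hf ⟨hxv.symm, h⟩
    by_cases h : x = u
    · subst h
      simp [rename, hxv, rename_eq_self x hfC hb.2]
    · simp [rename, h, hxv, ih hfC hb.2]
  | _ => simp [rename]

theorem mem_free_rename {B : Fml} {u v a : ℕ} (h : a ∈ (B.rename u v).free) :
    a = v ∨ (a ∈ B.free ∧ a ≠ u) := by
  induction B with
  | pred P args =>
    simp only [rename, free, List.mem_toFinset, List.mem_map] at h ⊢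
    obtain ⟨x, hx, rfl⟩ := h
    by_cases hxu : x = u
    · simp [hxu]
    · simp [hxu, hx]
  | neg C ih => exact ih h
  | imp C D ih1 ih2 =>
    simp only [rename, free, Finset.mem_union] at h ⊢
    rcases h with h | h
    · rcases ih1 h with h | h
      · exact .inl h
      · exact .inr ⟨.inl h.1, h.2⟩
    · rcases ih2 h with h | h
      · exact .inl h
      · exact .inr ⟨.inr h.1, h.2⟩
  | box C ih => exact ih h
  | all x C ih =>
    by_cases hxu : x = u
    · subst hxu
      simp only [rename, ↓reduceIte, free, Finset.mem_erase] at h ⊢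
      exact .inr ⟨h, h.1⟩
    · simp only [rename, hxu, ↓reduceIte, free, Finset.mem_erase] at h ⊢
      obtain ⟨hax, h⟩ := h
      rcases ih h with h | h
      · exact .inl h
      · exact .inr ⟨⟨hax, h.1⟩, h.2⟩
  | _ => simp [rename, free] at h

theorem notMem_free_rename (B : Fml) {u v : ℕ} (huv : u ≠ v) :
    u ∉ (B.rename u v).free := fun h => by
  rcases mem_free_rename h with h | h
  · exact huv h
  · exact h.2 rfl

/-- `impList [B₁, …, Bₙ] A` is `Bₙ → ⋯ → B₁ → A`: the head of the list is the innermost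
antecedent, so that discharging it is definitional. -/
def impList : List Fml → Fml → Fml
  | [], A => A
  | B :: Γ, A => impList Γ (B.imp A)

end Fml

open Fml

def PrfFrom (Ext : Fml → Prop) (Γ : List Fml) (A : Fml) : Prop := Prf Ext (impList Γ A)

variable {Ext : Fml → Prop}

theorem Prf.imp_refl (A : Fml) : Prf Ext (A.imp A) :=
  Prf.mp (Prf.mp (Prf.ax (Ax.imp2 A (A.imp A) A)) (Prf.ax (Ax.imp1 _ _))) (Prf.ax (Ax.imp1 _ _))

namespace PrfFrom

theorem of_prf : ∀ {Γ : List Fml} {A : Fml}, Prf Ext A → PrfFrom Ext Γ A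
  | [], _, h => h
  | C :: Γ, A, h => of_prf (Γ := Γ) (Prf.mp (Prf.ax (Ax.imp1 A C)) h)

theorem of_ax {Γ : List Fml} {A : Fml} (h : Ax A) : PrfFrom Ext Γ A :=
  of_prf (Prf.ax h)

theorem mp : ∀ {Γ : List Fml} {A B : Fml},
    PrfFrom Ext Γ (A.imp B) → PrfFrom Ext Γ A → PrfFrom Ext Γ B
  | [], _, _, h1, h2 => Prf.mp h1 h2
  | C :: Γ, A, B, h1, h2 =>
    mp (Γ := Γ) (mp (Γ := Γ) (of_prf (Prf.ax (Ax.imp2 C A B))) h1) h2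

theorem assumption : ∀ {Γ : List Fml} {A : Fml}, A ∈ Γ → PrfFrom Ext Γ A
  | C :: Γ, A, h => by
    rcases List.mem_cons.1 h with rfl | h
    · exact of_prf (Γ := Γ) (Prf.imp_refl A)
    · exact mp (Γ := Γ) (of_prf (Prf.ax (Ax.imp1 A C))) (assumption h)

theorem imp_intro {Γ : List Fml} {A B : Fml} (h : PrfFrom Ext (A :: Γ) B) :
    PrfFrom Ext Γ (A.imp B) := h

end PrfFrom

namespace Prf

open PrfFrom

theorem imp_trans {A B C : Fml} (h1 : Prf Ext (A.imp B)) (h2 : Prf Ext (B.imp C)) :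
    Prf Ext (A.imp C) :=
  imp_intro (Γ := []) <| (of_prf h2).mp <| (of_prf h1).mp <| assumption (by simp)

theorem imp_neg_neg (A : Fml) : Prf Ext (A.imp A.neg.neg) :=
  imp_intro (Γ := []) <| (of_ax (Ax.negI A.neg)).mp <| imp_intro <|
    ((of_ax (Ax.negE A)).mp (assumption (by simp))).mp (assumption (by simp))

theorem neg_neg_imp (A : Fml) : Prf Ext (A.neg.neg.imp A) :=
  Prf.mp (Prf.ax (Ax.contra A A.neg.neg)) (imp_neg_neg A.neg)

theorem contrapose {A B : Fml} (h : Prf Ext (A.imp B)) : Prf Ext (B.neg.imp A.neg) :=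
  imp_intro (Γ := []) <| (of_ax (Ax.negI A)).mp <| imp_intro <|
    ((of_ax (Ax.negE B)).mp (assumption (by simp))).mp ((of_prf h).mp (assumption (by simp)))

theorem of_contrapose {A B : Fml} (h : Prf Ext (A.neg.imp B.neg)) : Prf Ext (B.imp A) :=
  Prf.mp (Prf.ax (Ax.contra A B)) h

theorem land_imp_left (A B : Fml) : Prf Ext ((A.land B).imp A) :=
  of_contrapose <| imp_intro (Γ := []) <| (of_prf (imp_neg_neg (A.imp B.neg))).mp <| imp_intro <|
    (of_ax (Ax.exfalso B.neg)).mp <|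
      ((of_ax (Ax.negE A)).mp (assumption (by simp))).mp (assumption (by simp))

theorem land_imp_right (A B : Fml) : Prf Ext ((A.land B).imp B) :=
  of_contrapose <| imp_intro (Γ := []) <| (of_prf (imp_neg_neg (A.imp B.neg))).mp <|
    imp_intro <| assumption (by simp)

theorem imp_imp_land (A B : Fml) : Prf Ext (A.imp (B.imp (A.land B))) :=
  imp_intro (Γ := []) <| imp_intro <| (of_ax (Ax.negI (A.imp B.neg))).mp <| imp_intro <|
    ((of_ax (Ax.negE B)).mp
      ((assumption (A := A.imp B.neg) (by simp)).mp (assumption (A := A) (by simp)))).mp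
      (assumption (A := B) (by simp))

theorem imp_lor_left (A B : Fml) : Prf Ext (A.imp (A.lor B)) :=
  imp_intro (Γ := []) <| imp_intro <| (of_ax (Ax.exfalso B)).mp <|
    ((of_ax (Ax.negE A)).mp (assumption (by simp))).mp (assumption (by simp))

theorem imp_lor_right (A B : Fml) : Prf Ext (B.imp (A.lor B)) :=
  Prf.ax (Ax.imp1 B A.neg)

theorem lor_imp {A B C : Fml} (h1 : Prf Ext (A.imp C)) (h2 : Prf Ext (B.imp C)) :
    Prf Ext ((A.lor B).imp C) :=
  imp_intro (Γ := []) <| (of_prf (neg_neg_imp C)).mp <| (of_ax (Ax.negI C.neg)).mp <|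
    imp_intro <| ((of_ax (Ax.negE C)).mp (assumption (by simp))).mp <| (of_prf h2).mp <|
      (assumption (A := A.neg.imp B) (by simp [lor])).mp
        ((of_prf (contrapose h1)).mp (assumption (A := C.neg) (by simp)))

theorem imp_congr {A A' B B' : Fml} (h1 : Prf Ext (A'.imp A)) (h2 : Prf Ext (B.imp B')) :
    Prf Ext ((A.imp B).imp (A'.imp B')) :=
  imp_intro (Γ := []) <| imp_intro <| (of_prf h2).mp <|
    (assumption (A := A.imp B) (by simp)).mp
      ((of_prf h1).mp (assumption (A := A') (by simp)))

theorem box_mono {A B : Fml} (h : Prf Ext (A.imp B)) : Prf Ext (A.box.imp B.box) :=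
  Prf.mp (Prf.ax (Ax.k A B)) (Prf.nec h)

theorem all_mono {A B : Fml} (u : ℕ) (h : Prf Ext (A.imp B)) :
    Prf Ext ((Fml.all u A).imp (Fml.all u B)) :=
  Prf.mp (Prf.ax (Ax.allK A B u)) (Prf.gen u h)

theorem imp_all {A B : Fml} {u : ℕ} (hu : u ∉ A.free) (h : Prf Ext (A.imp B)) :
    Prf Ext (A.imp (Fml.all u B)) :=
  imp_trans (Prf.ax (Ax.allV A u hu)) (all_mono u h)

theorem all_imp_all_rename {C : Fml} {w w' : ℕ} (hf : w' ∉ C.free) (hb : w' ∉ C.bound) :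
    Prf Ext ((Fml.all w C).imp (Fml.all w' (C.rename w w'))) :=
  imp_all (by simp [free, hf]) (Prf.ax (Ax.allE C w w' hb))

theorem all_rename_imp_all {C : Fml} {w w' : ℕ} (hf : w' ∉ C.free) (hb : w' ∉ C.bound)
    (hwb : w ∉ C.bound) (hne : w' ≠ w) :
    Prf Ext ((Fml.all w' (C.rename w w')).imp (Fml.all w C)) := by
  have hinst := Prf.ax (Ext := Ext)
    (Ax.allE (C.rename w w') w' w (by rwa [bound_rename]))
  rw [rename_rename_eq_self hf hb] at hinst
  exact imp_all (by simp [free, notMem_free_rename C hne.symm]) hinst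

theorem exists_equiv_bound_disjoint (B : Fml) (S : Finset ℕ) :
    ∃ B' : Fml, Prf Ext (B.imp B') ∧ Prf Ext (B'.imp B) ∧ Disjoint B'.bound S := by
  induction B generalizing S with
  | neg C ih =>
    obtain ⟨C', h1, h2, hS⟩ := ih S
    exact ⟨C'.neg, contrapose h2, contrapose h1, hS⟩
  | imp C D ihC ihD =>
    obtain ⟨C', hc1, hc2, hcS⟩ := ihC S
    obtain ⟨D', hd1, hd2, hdS⟩ := ihD S
    exact ⟨C'.imp D', imp_congr hc2 hd1, imp_congr hc1 hd2, Finset.disjoint_union_left.2 ⟨hcS, hdS⟩⟩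
  | box C ih =>
    obtain ⟨C', h1, h2, hS⟩ := ih S
    exact ⟨C'.box, box_mono h1, box_mono h2, hS⟩
  | all w C ih =>
    obtain ⟨C', h1, h2, hS⟩ := ih (insert w S)
    rw [Finset.disjoint_insert_right] at hS
    obtain ⟨w', hw'⟩ := Infinite.exists_notMem_finset (C'.free ∪ C'.bound ∪ S ∪ {w})
    simp only [Finset.mem_union, Finset.mem_singleton, not_or] at hw'
    obtain ⟨⟨⟨hw'f, hw'b⟩, hw'S⟩, hw'w⟩ := hw'
    refine ⟨Fml.all w' (C'.rename w w'), imp_trans (all_mono w h1) (all_imp_all_rename hw'f hw'b),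
      imp_trans (all_rename_imp_all hw'f hw'b hS.1 hw'w) (all_mono w h2), ?_⟩
    simpa [bound, bound_rename, hw'S] using hS.2
  | _ => exact ⟨_, imp_refl _, imp_refl _, by simp [bound]⟩

theorem all_imp (B : Fml) (u : ℕ) : Prf Ext ((Fml.all u B).imp B) := by
  obtain ⟨B', h1, h2, hu⟩ := exists_equiv_bound_disjoint (Ext := Ext) B {u}
  have hinst := Prf.ax (Ext := Ext) (Ax.allE B' u u (Finset.disjoint_singleton_right.1 hu))
  rw [rename_self] at hinst
  exact imp_trans (imp_trans (all_mono u h1) hinst) h2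

theorem imp_ex (A : Fml) (u : ℕ) : Prf Ext (A.imp (Fml.ex u A)) :=
  imp_trans (imp_neg_neg A) (contrapose (all_imp A.neg u))

end Prf

open Prf

theorem QGL.box_imp_box_box (A : Fml) : QGL (A.box.imp A.box.box) := by
  have hind : QGL (A.imp ((A.land A.box).box.imp (A.land A.box))) :=
    PrfFrom.imp_intro (Γ := []) <| PrfFrom.imp_intro <|
      ((PrfFrom.of_prf (imp_imp_land A A.box)).mp (PrfFrom.assumption (A := A) (by simp))).mp
        ((PrfFrom.of_prf (box_mono (land_imp_left A A.box))).mp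
          (PrfFrom.assumption (A := (A.land A.box).box) (by simp)))
  have hlob : QGL (A.box.imp (A.land A.box).box) :=
    imp_trans (box_mono hind) (Prf.ext (AxL.lob (A.land A.box)))
  exact imp_trans hlob (box_mono (land_imp_right A A.box))

def SelfProver (A : Fml) : Prop := QGL (A.imp A.box)

theorem selfProver_verum : SelfProver Fml.verum :=
  Prf.mp (Prf.ax (Ax.imp1 Fml.verum.box Fml.verum)) (Prf.nec (Prf.ax Ax.verum))

theorem selfProver_box (A : Fml) : SelfProver A.box :=
  QGL.box_imp_box_box A

namespace SelfProver

theorem land {A B : Fml} (hA : SelfProver A) (hB : SelfProver B) : SelfProver (A.land B) := by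
  have hbox : QGL (A.box.imp (B.box.imp (A.land B).box)) :=
    imp_trans (box_mono (imp_imp_land A B)) (Prf.ax (Ax.k B (A.land B)))
  exact PrfFrom.imp_intro (Γ := []) <|
    ((PrfFrom.of_prf hbox).mp ((PrfFrom.of_prf (imp_trans (land_imp_left A B) hA)).mp
      (PrfFrom.assumption (by simp)))).mp
      ((PrfFrom.of_prf (imp_trans (land_imp_right A B) hB)).mp (PrfFrom.assumption (by simp)))

theorem lor {A B : Fml} (hA : SelfProver A) (hB : SelfProver B) : SelfProver (A.lor B) :=
  lor_imp (imp_trans hA (box_mono (imp_lor_left A B)))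
    (imp_trans hB (box_mono (imp_lor_right A B)))

theorem ex {A : Fml} (u : ℕ) (h : SelfProver A) : SelfProver (Fml.ex u A) := by
  have hinst : QGL (A.imp (Fml.ex u A).box) := imp_trans h (box_mono (imp_ex A u))
  have hgen : QGL ((Fml.ex u A).box.neg.imp (Fml.all u A.neg)) :=
    imp_all (by simp [Fml.ex, free]) (contrapose hinst)
  exact imp_trans (contrapose hgen) (neg_neg_imp _)

end SelfProver

theorem IsSigma.selfProver {A : Fml} (hA : IsSigma A) : SelfProver A := by
  induction hA with
  | box B => exact selfProver_box B
  | lor _ _ ihA ihB => exact ihA.lor ihB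
  | land _ _ ihA ihB => exact ihA.land ihB
  | ex u _ ih => exact ih.ex u

end PML

open PML PML.Fml in
/-- every Σ-formula is a self-prover in QGL; ⊤ and boxed formulas are
self-provers and self-provers are closed under ∧, ∨, ∃. -/
theorem stmt7 :
    (∀ A : Fml, IsSigma A → QGL (A.imp A.box)) ∧
    QGL (Fml.verum.imp Fml.verum.box) ∧
    (∀ A : Fml, QGL (A.box.imp A.box.box)) ∧
    (∀ A B : Fml, QGL (A.imp A.box) → QGL (B.imp B.box) →
      QGL ((A.land B).imp (A.land B).box)) ∧
    (∀ A B : Fml, QGL (A.imp A.box) → QGL (B.imp B.box) →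
      QGL ((A.lor B).imp (A.lor B).box)) ∧
    (∀ (A : Fml) (u : ℕ), QGL (A.imp A.box) →
      QGL ((Fml.ex u A).imp (Fml.ex u A).box)) :=
  ⟨fun _ hA => hA.selfProver, selfProver_verum, QGL.box_imp_box_box,
    fun _ _ => SelfProver.land, fun _ _ => SelfProver.lor, fun _ u h => SelfProver.ex u h⟩
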